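/- arXiv:1805.02044 — 4 statements merged into one kernel-verified Lean document; each statement's English description precedes it below -/
import Mathlib

section
/- For three binary random variables (Y, Z, X) with P(Y=1|Z=z,X=x) > 0 and 0 < P(Z=1|X=x) < 1 for all z,x ∈ {0,1}, define the conditional relative risks RR_{Y|X.Z=0} = P(Y=1|X=1,Z=0)/P(Y=1|X=0,Z=0), RR_{Y|Z.X=0} = P(Y=1|Z=1,X=0)/P(Y=1|Z=0,X=0), the interaction RR_{Y|ZX} = [P(Y=1|Z=1,X=1)·P(Y=1|Z=0,X=0)]/[P(Y=1|Z=1,X=0)·P(Y=1|Z=0,X=1)], the marginal relative risk RR_{Y|X} = P(Y=1|X=1)/P(Y=1|X=0), and π_{Z|x} = P(Z=1|X=x). Then RR_{Y|X} = RR_{Y|X.Z=0} × [RR_{Y|Z.X=0}·RR_{Y|ZX}·π_{Z|1} + (1−π_{Z|1})] / [RR_{Y|Z.X=0}·π_{Z|0} + (1−π_{Z|0})]. -/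
open MeasureTheory

variable {Ω : Type*} [MeasurableSpace Ω]

/-- Event that binary variable `W` takes value `b`. -/
def ev (W : Ω → Bool) (b : Bool) : Set Ω := {ω | W ω = b}

/-- Probability of a set. -/
noncomputable def pr (μ : Measure Ω) (A : Set Ω) : ℝ := (μ A).toReal

/-- Conditional probability P(A | B). -/
noncomputable def cpr (μ : Measure Ω) (A B : Set Ω) : ℝ := pr μ (A ∩ B) / pr μ B

/-- P(Y = 1 | Z = z, X = x). -/
noncomputable def pY (μ : Measure Ω) (Y Z X : Ω → Bool) (z x : Bool) : ℝ :=
  cpr μ (ev Y true) (ev Z z ∩ ev X x)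

/-- P(Y = 1 | X = x). -/
noncomputable def pYm (μ : Measure Ω) (Y X : Ω → Bool) (x : Bool) : ℝ :=
  cpr μ (ev Y true) (ev X x)

/-- P(Y = 1 | Z = z). -/
noncomputable def pYz (μ : Measure Ω) (Y Z : Ω → Bool) (z : Bool) : ℝ :=
  cpr μ (ev Y true) (ev Z z)

/-- P(Z = 1 | X = x). -/
noncomputable def pZ (μ : Measure Ω) (Z X : Ω → Bool) (x : Bool) : ℝ :=
  cpr μ (ev Z true) (ev X x)

/-- P(Y^D = 1 | Z = z, X = x) for the product outcome over D. -/
noncomputable def pD {V : Type*} (μ : Measure Ω) (Y : V → Ω → Bool) (D : Finset V)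
    (Z X : Ω → Bool) (z x : Bool) : ℝ :=
  cpr μ {ω | ∀ v ∈ D, Y v ω = true} (ev Z z ∩ ev X x)

/-- P(Y^D = 1 | X = x) for the product outcome over D. -/
noncomputable def pDm {V : Type*} (μ : Measure Ω) (Y : V → Ω → Bool) (D : Finset V)
    (X : Ω → Bool) (x : Bool) : ℝ :=
  cpr μ {ω | ∀ v ∈ D, Y v ω = true} (ev X x)

/-- P(Z_U = i_U | X = x) for a family of intermediate variables. -/
noncomputable def pZU {U : Type*} (μ : Measure Ω) (Z : U → Ω → Bool) (X : Ω → Bool)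
    (i : U → Bool) (x : Bool) : ℝ :=
  cpr μ {ω | ∀ u, Z u ω = i u} (ev X x)

/-- P(Y^D = 1 | Z_U = i_U, X = x). -/
noncomputable def pDU {V U : Type*} (μ : Measure Ω) (Y : V → Ω → Bool) (D : Finset V)
    (Z : U → Ω → Bool) (X : Ω → Bool) (i : U → Bool) (x : Bool) : ℝ :=
  cpr μ {ω | ∀ v ∈ D, Y v ω = true} ({ω | ∀ u, Z u ω = i u} ∩ ev X x)


lemma pr_split (μ : Measure Ω) [IsProbabilityMeasure μ] {Z : Ω → Bool}
    (hZ : Measurable Z) (S : Set Ω) :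
    pr μ S = pr μ (S ∩ ev Z true) + pr μ (S ∩ ev Z false) := by
  have ht : MeasurableSet (ev Z true) := hZ (measurableSet_singleton true)
  have hcompl : S ∩ ev Z false = S \ ev Z true := by
    ext ω; simp [ev, Set.mem_diff]
  rw [hcompl]
  unfold pr
  rw [← measure_inter_add_diff S ht,
    ENNReal.toReal_add (measure_ne_top _ _) (measure_ne_top _ _)]

lemma total_prob (μ : Measure Ω) [IsProbabilityMeasure μ]
    (Y Z X : Ω → Bool) (hZm : Measurable Z)
    (hXpos : ∀ x : Bool, 0 < pr μ (ev X x))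
    (hZX : ∀ z x : Bool, 0 < pr μ (ev Z z ∩ ev X x)) (x : Bool) :
    pYm μ Y X x = pY μ Y Z X true x * pZ μ Z X x
      + pY μ Y Z X false x * (1 - pZ μ Z X x) := by
  have ha : pr μ (ev X x) = pr μ (ev Z true ∩ ev X x) + pr μ (ev Z false ∩ ev X x) := by
    rw [pr_split μ hZm (ev X x), Set.inter_comm (ev X x), Set.inter_comm (ev X x)]
  have hnum : pr μ (ev Y true ∩ ev X x)
      = pr μ (ev Y true ∩ (ev Z true ∩ ev X x))
        + pr μ (ev Y true ∩ (ev Z false ∩ ev X x)) := by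
    rw [pr_split μ hZm (ev Y true ∩ ev X x)]
    congr 1 <;> · congr 1; ext ω; simp [ev]; tauto
  have hzt := (hZX true x).ne'
  have hzf := (hZX false x).ne'
  have hax := (hXpos x).ne'
  have hpz : pZ μ Z X x = pr μ (ev Z true ∩ ev X x) / pr μ (ev X x) := rfl
  have h1z : 1 - pZ μ Z X x = pr μ (ev Z false ∩ ev X x) / pr μ (ev X x) := by
    rw [hpz]; field_simp; linarith [ha]
  unfold pYm pY cpr
  rw [hnum, h1z, hpz]
  field_simp

theorem stmt_0 (μ : Measure Ω) [IsProbabilityMeasure μ]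
    (Y Z X : Ω → Bool) (hYm : Measurable Y) (hZm : Measurable Z) (hXm : Measurable X)
    (hXpos : ∀ x : Bool, 0 < pr μ (ev X x))
    (hZX : ∀ z x : Bool, 0 < pr μ (ev Z z ∩ ev X x))
    (hYpos : ∀ z x : Bool, 0 < pY μ Y Z X z x)
    (hZ01 : ∀ x : Bool, 0 < pZ μ Z X x ∧ pZ μ Z X x < 1) :
    pYm μ Y X true / pYm μ Y X false =
      (pY μ Y Z X false true / pY μ Y Z X false false) *
      (((pY μ Y Z X true false / pY μ Y Z X false false) *
          ((pY μ Y Z X true true * pY μ Y Z X false false) /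
            (pY μ Y Z X true false * pY μ Y Z X false true)) * pZ μ Z X true +
          (1 - pZ μ Z X true)) /
        ((pY μ Y Z X true false / pY μ Y Z X false false) * pZ μ Z X false +
          (1 - pZ μ Z X false))) := by
  have ptt := hYpos true true
  have ptf := hYpos true false
  have pft := hYpos false true
  have pff := hYpos false false
  have qt0 := (hZ01 true).1
  have qt1 := (hZ01 true).2
  have qf0 := (hZ01 false).1
  have qf1 := (hZ01 false).2
  rw [total_prob μ Y Z X hZm hXpos hZX true, total_prob μ Y Z X hZm hXpos hZX false]
  set ptt' := pY μ Y Z X true true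
  set ptf' := pY μ Y Z X true false
  set pft' := pY μ Y Z X false true
  set pff' := pY μ Y Z X false false
  set qt := pZ μ Z X true
  set qf := pZ μ Z X false
  have hden : 0 < ptf' * qf + pff' * (1 - qf) := by nlinarith [mul_pos ptf qf0, mul_pos pff (by linarith : (0:ℝ) < 1 - qf)]
  have hden2 : ptf' / pff' * qf + (1 - qf) = (ptf' * qf + pff' * (1 - qf)) / pff' := by
    field_simp
  rw [hden2]
  field_simp
end

section
/- Let (Y,Z,X) be binary random variables with all conditional probabilities P(Y=1|Z=z,X=x) positive, and write the log-mean regression parameters α = log P(Y=1|Z=0,X=0), θ_{Y|Z.X} = log[P(Y=1|Z=1,X=0)/P(Y=1|Z=0,X=0)], θ_{Y|X.Z} = log[P(Y=1|Z=0,X=1)/P(Y=1|Z=0,X=0)], θ_{Y|ZX} = log RR_{Y|ZX} (the interaction), so that log P(Y=1|Z=z,X=x) = α + θ_{Y|Z.X}·z + θ_{Y|X.Z}·x + θ_{Y|ZX}·zx for all z,x ∈ {0,1}. Similarly write α_Z = log P(Z=1|X=0), θ_{Z|X} = log[P(Z=1|X=1)/P(Z=1|X=0)], and θ_{Y|X}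 = log[P(Y=1|X=1)/P(Y=1|X=0)]. Then θ_{Y|X} = θ_{Y|X.Z} + λ, where λ = log{[exp(θ_{Y|Z.X}+θ_{Y|ZX})·exp(α_Z+θ_{Z|X}) + 1 − exp(α_Z+θ_{Z|X})] / [exp(θ_{Y|Z.X})·exp(α_Z) + 1 − exp(α_Z)]}. -/
open MeasureTheory

variable {Ω : Type*} [MeasurableSpace Ω]

/-! By total probability over `Z`, `P(Y=1|X=x) = P(Y=1|Z=1,X=x) q_x + P(Y=1|Z=0,X=x) (1 - q_x)`
with `q_x = P(Z=1|X=x)`. Dividing by the `Z = 0` stratum `P(Y=1|Z=0,X=x)` turns this mixture into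
`r_x q_x + 1 - q_x` with `r_0 = exp θ_{Y|Z.X}` and `r_1 = exp (θ_{Y|Z.X} + θ_{Y|ZX})`: these are
the denominator and numerator of `λ`, and the quotient of the two strata is `exp θ_{Y|X.Z}`. -/

lemma compl_ev_true {α : Type*} [MeasurableSpace α] (W : α → Bool) :
    (ev W true)ᶜ = ev W false := by
  ext ω
  simp [ev]

section ConditionalProbability

variable (μ : Measure Ω) {S : Set Ω}

lemma pr_inter_add_pr_inter_compl [IsFiniteMeasure μ] (hS : MeasurableSet S) (A : Set Ω) :
    pr μ (A ∩ S) + pr μ (A ∩ Sᶜ) = pr μ A := by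
  unfold pr
  rw [← ENNReal.toReal_add (measure_ne_top μ _) (measure_ne_top μ _), ← Set.sdiff_eq,
    measure_inter_add_sdiff A hS]

lemma cpr_inter_add_cpr_inter_compl [IsFiniteMeasure μ] (hS : MeasurableSet S) (A B : Set Ω) :
    cpr μ (A ∩ S) B + cpr μ (A ∩ Sᶜ) B = cpr μ A B := by
  unfold cpr
  rw [← add_div, Set.inter_right_comm A S, Set.inter_right_comm A Sᶜ,
    pr_inter_add_pr_inter_compl μ hS]

lemma cpr_compl [IsFiniteMeasure μ] (hS : MeasurableSet S) {B : Set Ω} (hB : pr μ B ≠ 0) :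
    cpr μ Sᶜ B = 1 - cpr μ S B := by
  have hsum := cpr_inter_add_cpr_inter_compl μ hS Set.univ B
  rw [Set.univ_inter, Set.univ_inter] at hsum
  rw [eq_sub_iff_add_eq', hsum, cpr, Set.univ_inter, div_self hB]

lemma cpr_inter_mul_cpr {A B : Set Ω} (h : pr μ (S ∩ B) ≠ 0) :
    cpr μ A (S ∩ B) * cpr μ S B = cpr μ (A ∩ S) B := by
  rw [cpr, cpr, cpr, Set.inter_assoc, div_mul_div_cancel₀ h]

lemma cpr_eq_add_of_measurableSet [IsFiniteMeasure μ] (hS : MeasurableSet S) (A : Set Ω)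
    {B : Set Ω} (hSB : pr μ (S ∩ B) ≠ 0) (hSB' : pr μ (Sᶜ ∩ B) ≠ 0) :
    cpr μ A B = cpr μ A (S ∩ B) * cpr μ S B + cpr μ A (Sᶜ ∩ B) * cpr μ Sᶜ B := by
  rw [cpr_inter_mul_cpr μ hSB, cpr_inter_mul_cpr μ hSB', cpr_inter_add_cpr_inter_compl μ hS]

end ConditionalProbability

lemma pYm_eq_mixture (μ : Measure Ω) [IsFiniteMeasure μ] {Y Z X : Ω → Bool}
    (hZm : Measurable Z) (x : Bool) (hX : pr μ (ev X x) ≠ 0)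
    (hZX : ∀ z, pr μ (ev Z z ∩ ev X x) ≠ 0) :
    pYm μ Y X x = pY μ Y Z X true x * pZ μ Z X x + pY μ Y Z X false x * (1 - pZ μ Z X x) := by
  have hS : MeasurableSet (ev Z true) := hZm (measurableSet_singleton true)
  rw [pYm, pY, pY, pZ, cpr_eq_add_of_measurableSet μ hS _ (hZX true)
    (by rw [compl_ev_true]; exact hZX false), cpr_compl μ hS hX, compl_ev_true]

lemma mixture_pos {a b q : ℝ} (ha : 0 < a) (hb : 0 < b) (hq₀ : 0 ≤ q) (hq₁ : q ≤ 1) :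
    0 < a * q + b * (1 - q) := by
  rcases hq₀.eq_or_lt with rfl | hq
  · simpa using hb
  · nlinarith [mul_pos ha hq, mul_nonneg hb.le (sub_nonneg.2 hq₁)]

lemma div_mul_add_one_sub {a b : ℝ} (ha : a ≠ 0) (q : ℝ) :
    b / a * q + 1 - q = (b * q + a * (1 - q)) / a := by
  field_simp
  ring

lemma log_div_eq_log_div_add_log_div_div {a b c d : ℝ} (ha : a ≠ 0) (hb : b ≠ 0)
    (hc : c ≠ 0) (hd : d ≠ 0) :
    Real.log (c / d) = Real.log (a / b) + Real.log (c / a / (d / b)) := by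
  rw [← Real.log_mul (by positivity) (by positivity)]
  congr 1
  field_simp

theorem stmt_1_general (μ : Measure Ω) [IsProbabilityMeasure μ]
    (Y Z X : Ω → Bool) (hZm : Measurable Z)
    (hXpos : ∀ x : Bool, 0 < pr μ (ev X x))
    (hZX : ∀ z x : Bool, 0 < pr μ (ev Z z ∩ ev X x))
    (hYpos : ∀ z x : Bool, 0 < pY μ Y Z X z x)
    (hZ01 : ∀ x : Bool, 0 < pZ μ Z X x ∧ pZ μ Z X x < 1)
    (θZ θX θZX αZ θZx θYX lam : ℝ)
    (hθZ : θZ = Real.log (pY μ Y Z X true false / pY μ Y Z X false false))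
    (hθX : θX = Real.log (pY μ Y Z X false true / pY μ Y Z X false false))
    (hθZX : θZX = Real.log ((pY μ Y Z X true true * pY μ Y Z X false false) /
      (pY μ Y Z X true false * pY μ Y Z X false true)))
    (hαZ : αZ = Real.log (pZ μ Z X false))
    (hθZx : θZx = Real.log (pZ μ Z X true / pZ μ Z X false))
    (hθYX : θYX = Real.log (pYm μ Y X true / pYm μ Y X false))
    (hlam : lam = Real.log
      ((Real.exp (θZ + θZX) * Real.exp (αZ + θZx) + 1 - Real.exp (αZ + θZx)) /
        (Real.exp θZ * Real.exp αZ + 1 - Real.exp αZ))) :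
    θYX = θX + lam := by
  have h00 := hYpos false false
  have h10 := hYpos true false
  have h01 := hYpos false true
  have h11 := hYpos true true
  obtain ⟨hq0, -⟩ := hZ01 false
  have hm (x : Bool) := pYm_eq_mixture μ (Y := Y) hZm x (hXpos x).ne' (fun z ↦ (hZX z x).ne')
  have hm_ne (x : Bool) : pYm μ Y X x ≠ 0 := by
    rw [hm x]
    exact (mixture_pos (hYpos _ _) (hYpos _ _) (hZ01 x).1.le (hZ01 x).2.le).ne'
  have eθZ : Real.exp θZ = pY μ Y Z X true false / pY μ Y Z X false false := by
    rw [hθZ, Real.exp_log (by positivity)]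
  have eαZ : Real.exp αZ = pZ μ Z X false := by
    rw [hαZ, Real.exp_log hq0]
  have eθZZX : Real.exp (θZ + θZX) = pY μ Y Z X true true / pY μ Y Z X false true := by
    rw [Real.exp_add, eθZ, hθZX, Real.exp_log (by positivity)]
    field_simp
  have eαθZx : Real.exp (αZ + θZx) = pZ μ Z X true := by
    rw [Real.exp_add, eαZ, hθZx, Real.exp_log (div_pos (hZ01 true).1 hq0)]
    field_simp
  rw [hθYX, hθX, hlam, eθZZX, eαθZx, eθZ, eαZ, div_mul_add_one_sub h01.ne',
    div_mul_add_one_sub h00.ne', ← hm, ← hm]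
  exact log_div_eq_log_div_add_log_div_div h01.ne' h00.ne' (hm_ne true) (hm_ne false)

theorem stmt_1 (μ : Measure Ω) [IsProbabilityMeasure μ]
    (Y Z X : Ω → Bool) (hYm : Measurable Y) (hZm : Measurable Z) (hXm : Measurable X)
    (hXpos : ∀ x : Bool, 0 < pr μ (ev X x))
    (hZX : ∀ z x : Bool, 0 < pr μ (ev Z z ∩ ev X x))
    (hYpos : ∀ z x : Bool, 0 < pY μ Y Z X z x)
    (hZ01 : ∀ x : Bool, 0 < pZ μ Z X x ∧ pZ μ Z X x < 1)
    (α θZ θX θZX αZ θZx θYX lam : ℝ)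
    (hα : α = Real.log (pY μ Y Z X false false))
    (hθZ : θZ = Real.log (pY μ Y Z X true false / pY μ Y Z X false false))
    (hθX : θX = Real.log (pY μ Y Z X false true / pY μ Y Z X false false))
    (hθZX : θZX = Real.log ((pY μ Y Z X true true * pY μ Y Z X false false) /
      (pY μ Y Z X true false * pY μ Y Z X false true)))
    (hreg : ∀ z x : Bool, Real.log (pY μ Y Z X z x) =
      α + θZ * (if z then 1 else 0) + θX * (if x then 1 else 0) +
        θZX * ((if z then 1 else 0) * (if x then 1 else 0)))
    (hαZ : αZ = Real.log (pZ μ Z X false))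
    (hθZx : θZx = Real.log (pZ μ Z X true / pZ μ Z X false))
    (hθYX : θYX = Real.log (pYm μ Y X true / pYm μ Y X false))
    (hlam : lam = Real.log
      ((Real.exp (θZ + θZX) * Real.exp (αZ + θZx) + 1 - Real.exp (αZ + θZx)) /
        (Real.exp θZ * Real.exp αZ + 1 - Real.exp αZ))) :
    θYX = θX + lam :=
  stmt_1_general μ Y Z X hZm hXpos hZX hYpos hZ01 θZ θX θZX αZ θZx θYX lam hθZ hθX hθZX hαZ hθZx
    hθYX hlam
end

section
/- Let (Y,Z,X) be binary random variables with all relevant probabilities positive. The marginal relative risk can be written as RR_{Y|X} = RR_{Y|X.Z=0} × (A₁/A₀), where A_x = RR_{Y|Z.X=x}·P(Z=1|X=x) + P(Z=0|X=x) is the weighted average, over the conditional distribution of Z given X=x, of the relative risks (RR_{Y|Z.X=x} when Z=1, and 1 when Z=0). Equivalently, A_x = P(Y=1|X=x)/P(Y=1|Z=0,X=x). -/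
open MeasureTheory

variable {Ω : Type*} [MeasurableSpace Ω]

theorem stmt_7 (μ : Measure Ω) [IsProbabilityMeasure μ]
    (Y Z X : Ω → Bool) (hYm : Measurable Y) (hZm : Measurable Z) (hXm : Measurable X)
    (hXpos : ∀ x : Bool, 0 < pr μ (ev X x))
    (hZX : ∀ z x : Bool, 0 < pr μ (ev Z z ∩ ev X x))
    (hYpos : ∀ z x : Bool, 0 < pY μ Y Z X z x)
    (hZ01 : ∀ x : Bool, 0 < pZ μ Z X x ∧ pZ μ Z X x < 1)
    (A1 A0 : ℝ)
    (hA1 : A1 = (pY μ Y Z X true true / pY μ Y Z X false true) * pZ μ Z X true +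
      cpr μ (ev Z false) (ev X true))
    (hA0 : A0 = (pY μ Y Z X true false / pY μ Y Z X false false) * pZ μ Z X false +
      cpr μ (ev Z false) (ev X false)) :
    pYm μ Y X true / pYm μ Y X false =
        (pY μ Y Z X false true / pY μ Y Z X false false) * (A1 / A0) ∧
      A1 = pYm μ Y X true / pY μ Y Z X false true ∧
      A0 = pYm μ Y X false / pY μ Y Z X false false := by
  have hevm : ∀ (W : Ω → Bool) (_ : Measurable W) (b : Bool), MeasurableSet (ev W b) :=
    fun W hW b => hW (measurableSet_singleton b)
  have key : ∀ x : Bool, pr μ (ev Y true ∩ ev X x)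
      = pr μ (ev Y true ∩ (ev Z true ∩ ev X x)) + pr μ (ev Y true ∩ (ev Z false ∩ ev X x)) := by
    intro x
    have hunion : (ev Y true ∩ (ev Z true ∩ ev X x)) ∪ (ev Y true ∩ (ev Z false ∩ ev X x))
        = ev Y true ∩ ev X x := by
      ext ω
      simp only [ev, Set.mem_union, Set.mem_inter_iff, Set.mem_setOf_eq]
      constructor
      · rintro (⟨h1, _, h3⟩ | ⟨h1, _, h3⟩) <;> exact ⟨h1, h3⟩
      · rintro ⟨h1, h3⟩
        cases hz : Z ω
        · exact Or.inr ⟨h1, rfl, h3⟩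
        · exact Or.inl ⟨h1, rfl, h3⟩
    have hdisj : Disjoint (ev Y true ∩ (ev Z true ∩ ev X x))
        (ev Y true ∩ (ev Z false ∩ ev X x)) := by
      rw [Set.disjoint_left]
      rintro ω ⟨_, hz, _⟩ ⟨_, hz', _⟩
      simp only [ev, Set.mem_setOf_eq] at hz hz'
      rw [hz] at hz'
      exact Bool.noConfusion hz'
    have hmeas : MeasurableSet (ev Y true ∩ (ev Z false ∩ ev X x)) :=
      ((hevm Y hYm true).inter ((hevm Z hZm false).inter (hevm X hXm x)))
    have h2 := measure_union (μ := μ) hdisj hmeas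
    rw [hunion] at h2
    simp only [pr, h2]
    exact ENNReal.toReal_add (measure_ne_top μ _) (measure_ne_top μ _)
  have ha : ∀ z x : Bool, 0 < pr μ (ev Y true ∩ (ev Z z ∩ ev X x)) := by
    intro z x
    have h := hYpos z x
    simp only [pY, cpr] at h
    by_contra hc
    push_neg at hc
    have h0 : pr μ (ev Y true ∩ (ev Z z ∩ ev X x)) = 0 :=
      le_antisymm hc ENNReal.toReal_nonneg
    rw [h0] at h
    simp at h
  have hAeq : ∀ x : Bool,
      (pY μ Y Z X true x / pY μ Y Z X false x) * pZ μ Z X x + cpr μ (ev Z false) (ev X x)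
        = pYm μ Y X x / pY μ Y Z X false x := by
    intro x
    have hat := ha true x
    have haf := ha false x
    have hbt := hZX true x
    have hbf := hZX false x
    have hc := hXpos x
    simp only [pY, pYm, pZ, cpr]
    rw [key x]
    field_simp
  have hA1' : A1 = pYm μ Y X true / pY μ Y Z X false true := by rw [hA1, hAeq]
  have hA0' : A0 = pYm μ Y X false / pY μ Y Z X false false := by rw [hA0, hAeq]
  refine ⟨?_, hA1', hA0'⟩
  have hpYm : ∀ x : Bool, 0 < pYm μ Y X x := by
    intro x
    have := key x
    have hc := hXpos x
    simp only [pYm, cpr]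
    rw [this]
    exact div_pos (add_pos (ha true x) (ha false x)) hc
  rw [hA1', hA0']
  have h1 := (hYpos false true).ne'
  have h2 := (hYpos false false).ne'
  have h3 := (hpYm false).ne'
  field_simp
end

section
/- Let (Y,Z,X) be binary random variables with all relevant probabilities positive, satisfying the no-interaction condition RR_{Y|ZX} = 1 and with RR_{Y|Z.X=0} = RR_{Y|Z.X=1} := r. Then the marginal relative risk satisfies RR_{Y|X} = RR_{Y|X.Z=0} · [r·π₁ + (1−π₁)]/[r·π₀ + (1−π₀)] with π_x = P(Z=1|X=x), and the deviation factor [r·π₁+(1−π₁)]/[r·π₀+(1−π₀)] is strictly greater than 1 if and only if (r − 1)(π₁ − π₀) > 0. -/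
open MeasureTheory

variable {Ω : Type*} [MeasurableSpace Ω]

theorem stmt_12 (μ : Measure Ω) [IsProbabilityMeasure μ]
    (Y Z X : Ω → Bool) (hYm : Measurable Y) (hZm : Measurable Z) (hXm : Measurable X)
    (hXpos : ∀ x : Bool, 0 < pr μ (ev X x))
    (hZX : ∀ z x : Bool, 0 < pr μ (ev Z z ∩ ev X x))
    (hYpos : ∀ z x : Bool, 0 < pY μ Y Z X z x)
    (hZ01 : ∀ x : Bool, 0 < pZ μ Z X x ∧ pZ μ Z X x < 1)
    (hnoint : pY μ Y Z X true true * pY μ Y Z X false false =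
      pY μ Y Z X true false * pY μ Y Z X false true)
    (r f : ℝ)
    (hr0 : r = pY μ Y Z X true false / pY μ Y Z X false false)
    (hr1 : r = pY μ Y Z X true true / pY μ Y Z X false true)
    (hf : f = (r * pZ μ Z X true + (1 - pZ μ Z X true)) /
      (r * pZ μ Z X false + (1 - pZ μ Z X false))) :
    pYm μ Y X true / pYm μ Y X false =
        (pY μ Y Z X false true / pY μ Y Z X false false) * f ∧
      (1 < f ↔ 0 < (r - 1) * (pZ μ Z X true - pZ μ Z X false)) := by

  classical
  have evM : ∀ (W : Ω → Bool) (_ : Measurable W) (b : Bool), MeasurableSet (ev W b) :=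
    fun W hW b => hW (measurableSet_singleton b)
  -- splitting by Z
  have split : ∀ (A : Set Ω), MeasurableSet A → ∀ x : Bool,
      pr μ (A ∩ ev X x) =
        pr μ (A ∩ (ev Z true ∩ ev X x)) + pr μ (A ∩ (ev Z false ∩ ev X x)) := by
    intro A hA x
    have hset : A ∩ ev X x =
        (A ∩ (ev Z true ∩ ev X x)) ∪ (A ∩ (ev Z false ∩ ev X x)) := by
      ext ω
      simp only [ev, Set.mem_inter_iff, Set.mem_union, Set.mem_setOf_eq]
      cases hz : Z ω <;> tauto
    have hdisj : Disjoint (A ∩ (ev Z true ∩ ev X x)) (A ∩ (ev Z false ∩ ev X x)) := by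
      rw [Set.disjoint_left]
      rintro ω ⟨-, h1, -⟩ ⟨-, h2, -⟩
      simp [ev] at h1 h2
      rw [h1] at h2; exact Bool.noConfusion h2
    have hm2 : MeasurableSet (A ∩ (ev Z false ∩ ev X x)) :=
      hA.inter ((evM Z hZm false).inter (evM X hXm x))
    unfold pr
    rw [hset, measure_union hdisj hm2,
      ENNReal.toReal_add (measure_ne_top μ _) (measure_ne_top μ _)]
  -- abbreviations
  set at1 := pr μ (ev Y true ∩ (ev Z true ∩ ev X true)) with hat1
  -- basic facts
  have hc : ∀ x : Bool, 0 < pr μ (ev X x) := hXpos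
  have hbne : ∀ z x : Bool, pr μ (ev Z z ∩ ev X x) ≠ 0 := fun z x => (hZX z x).ne'
  have hcne : ∀ x : Bool, pr μ (ev X x) ≠ 0 := fun x => (hXpos x).ne'
  have hsplitX : ∀ x : Bool, pr μ (ev X x) =
      pr μ (ev Z true ∩ ev X x) + pr μ (ev Z false ∩ ev X x) := by
    intro x
    have := split Set.univ MeasurableSet.univ x
    simpa using this
  have hsplitY : ∀ x : Bool, pr μ (ev Y true ∩ ev X x) =
      pr μ (ev Y true ∩ (ev Z true ∩ ev X x)) + pr μ (ev Y true ∩ (ev Z false ∩ ev X x)) :=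
    fun x => split (ev Y true) (evM Y hYm true) x
  -- conditional probability decompositions
  have hpZ : ∀ x : Bool, pZ μ Z X x = pr μ (ev Z true ∩ ev X x) / pr μ (ev X x) := fun x => rfl
  have hpZ' : ∀ x : Bool, 1 - pZ μ Z X x = pr μ (ev Z false ∩ ev X x) / pr μ (ev X x) := by
    intro x
    rw [hpZ x, eq_div_iff (hcne x), sub_mul, div_mul_cancel₀ _ (hcne x), one_mul]
    have := hsplitX x
    linarith
  have hpY : ∀ z x : Bool, pY μ Y Z X z x =
      pr μ (ev Y true ∩ (ev Z z ∩ ev X x)) / pr μ (ev Z z ∩ ev X x) := fun z x => rfl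
  have hpYm : ∀ x : Bool, pYm μ Y X x = pr μ (ev Y true ∩ ev X x) / pr μ (ev X x) :=
    fun x => rfl
  -- r positivity and relation pY true x = r * pY false x
  have hrpos : 0 < r := by
    rw [hr0]; exact div_pos (hYpos true false) (hYpos false false)
  have hrel : ∀ x : Bool, pY μ Y Z X true x = r * pY μ Y Z X false x := by
    intro x
    cases x
    · rw [hr0, div_mul_cancel₀ _ (hYpos false false).ne']
    · rw [hr1, div_mul_cancel₀ _ (hYpos false true).ne']
  -- total probability
  have key : ∀ x : Bool, pYm μ Y X x =
      pY μ Y Z X false x * (r * pZ μ Z X x + (1 - pZ μ Z X x)) := by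
    intro x
    have h1 : pY μ Y Z X true x * pZ μ Z X x =
        pr μ (ev Y true ∩ (ev Z true ∩ ev X x)) / pr μ (ev X x) := by
      rw [hpY, hpZ, div_mul_div_comm, mul_comm (pr μ (ev Z true ∩ ev X x)),
        mul_div_mul_right _ _ (hbne true x)]
    have h2 : pY μ Y Z X false x * (1 - pZ μ Z X x) =
        pr μ (ev Y true ∩ (ev Z false ∩ ev X x)) / pr μ (ev X x) := by
      rw [hpY, hpZ', div_mul_div_comm, mul_comm (pr μ (ev Z false ∩ ev X x)),
        mul_div_mul_right _ _ (hbne false x)]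
    have : pY μ Y Z X false x * (r * pZ μ Z X x + (1 - pZ μ Z X x)) =
        pY μ Y Z X true x * pZ μ Z X x + pY μ Y Z X false x * (1 - pZ μ Z X x) := by
      rw [hrel x]; ring
    rw [this, h1, h2, hpYm, hsplitY x, add_div]
  -- denominators for f
  have hden : ∀ x : Bool, 0 < r * pZ μ Z X x + (1 - pZ μ Z X x) := by
    intro x
    have h1 := (hZ01 x).1
    have h2 := (hZ01 x).2
    nlinarith
  constructor
  · rw [key true, key false, hf]
    field_simp
  · rw [hf]
    rw [one_lt_div (hden false)]
    constructor <;> intro h <;> nlinarith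
end
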